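/- Let L_x, L_y > 0 and let 𝒦² = {(2π n₁/L_x, 2π n₂/L_y) : n₁, n₂ ∈ ℤ} be the reciprocal lattice. Let q_1, …, q_N ∈ ℝ, let (ẋ_j, z_j) ∈ ℝ² × ℝ for j = 1, …, N, fix i ∈ {1, …, N}, and let w_ℓ > 0 and s_ℓ > 0 for ℓ = m+1, …, M, and K > 0. Then |Σ_{ℓ=m+1}^{M} w_ℓ s_ℓ² Σ_{k ∈ 𝒦², |k| > K} exp(-s_ℓ² |k|²/4) Σ_{j=1}^{N} q_j exp(i k·(ẋ_i - ẋ_j)) exp(-(z_i - z_j)²/s_ℓ²)| ≤ (Σ_{j=1}^{N} |q_j|) · Σ_{ℓ=m+1}^{M} w_ℓ s_ℓ² (1 + √2 L_x/(s_ℓ√π)) (1 + √2 L_y/(s_ℓ√π)) · exp(-s_ℓ² K²/8). -/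

import Mathlib

/-!
For `|k| > K` split `exp (-s²|k|²/4) ≤ exp (-s²K²/8) · exp (-s²|k|²/8)`. The phases have modulus
one and the `z`-Gaussians are at most one, so the charge sum at each `k` is at most `∑ⱼ |qⱼ|`.
What is left is the full lattice sum of `exp (-s²|k|²/8)`, which factorises into two theta sums
`∑_{n ∈ ℤ} exp (-a n²)` with `a = s²π²/(2L²)`; comparing with the Gaussian integral bounds each
by `1 + √(π/a) = 1 + √2 L/(s√π)`.
-/

open Real Set MeasureTheory

section ThetaSum

variable {a : ℝ}

lemma antitoneOn_exp_neg_mul_sq (ha : 0 ≤ a) :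
    AntitoneOn (fun x : ℝ => exp (-(a * x ^ 2))) (Ici 0) := by
  intro u hu v _ huv
  exact exp_le_exp.mpr (neg_le_neg (mul_le_mul_of_nonneg_left (pow_le_pow_left₀ hu huv 2) ha))

lemma integrableOn_Ioi_exp_neg_mul_sq (ha : 0 < a) :
    IntegrableOn (fun x : ℝ => exp (-(a * x ^ 2))) (Ioi 0) := by
  simpa only [neg_mul] using (integrable_exp_neg_mul_sq ha).integrableOn

lemma summable_int_exp_neg_mul_sq (ha : 0 < a) :
    Summable fun n : ℤ => exp (-(a * (n : ℝ) ^ 2)) := by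
  have hnat : Summable fun n : ℕ => exp (-(a * (n : ℝ) ^ 2)) :=
    (antitoneOn_exp_neg_mul_sq ha.le).summable_of_integrableOn_Ioi_zero
      (integrableOn_Ioi_exp_neg_mul_sq ha) fun _ _ => (exp_pos _).le
  exact .of_nat_of_neg (by exact_mod_cast hnat) (by simpa only [Int.cast_neg, Int.cast_natCast,
    neg_sq] using hnat)

lemma tsum_int_exp_neg_mul_sq_le (ha : 0 < a) :
    ∑' n : ℤ, exp (-(a * (n : ℝ) ^ 2)) ≤ 1 + √(π / a) := by
  have heven : Function.Even fun n : ℤ => exp (-(a * (n : ℝ) ^ 2)) := fun n => by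
    simp only [Int.cast_neg, neg_sq]
  have htail : ∑' n : ℕ, exp (-(a * ((n + 1 : ℕ) : ℝ) ^ 2)) ≤ √(π / a) / 2 := by
    have hgauss : ∫ x in Ioi 0, exp (-(a * x ^ 2)) = √(π / a) / 2 := by
      simpa only [neg_mul] using integral_gaussian_Ioi a
    exact hgauss ▸ (antitoneOn_exp_neg_mul_sq ha.le).tsum_add_one_le_integral
      (integrableOn_Ioi_exp_neg_mul_sq ha) fun _ _ => (exp_pos _).le
  rw [tsum_int_eq_zero_add_two_mul_tsum_pnat heven (summable_int_exp_neg_mul_sq ha)]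
  simp only [Int.cast_zero, Int.cast_natCast, nsmul_eq_mul]
  rw [tsum_pnat_eq_tsum_succ (f := fun n : ℕ => exp (-(a * (n : ℝ) ^ 2)))]
  simp only [ne_eq, OfNat.ofNat_ne_zero, not_false_eq_true, zero_pow, mul_zero, neg_zero, exp_zero]
  linarith

variable {b : ℝ}

lemma summable_int_prod_exp_neg_mul_sq (ha : 0 < a) (hb : 0 < b) :
    Summable fun n : ℤ × ℤ => exp (-(a * (n.1 : ℝ) ^ 2 + b * (n.2 : ℝ) ^ 2)) := by
  simp only [neg_add, exp_add]
  exact (summable_int_exp_neg_mul_sq ha).mul_of_nonneg (summable_int_exp_neg_mul_sq hb)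
    (fun _ => (exp_pos _).le) fun _ => (exp_pos _).le

lemma tsum_int_prod_exp_neg_mul_sq_le (ha : 0 < a) (hb : 0 < b) :
    ∑' n : ℤ × ℤ, exp (-(a * (n.1 : ℝ) ^ 2 + b * (n.2 : ℝ) ^ 2)) ≤
      (1 + √(π / a)) * (1 + √(π / b)) := by
  have hprod := summable_int_prod_exp_neg_mul_sq ha hb
  simp only [neg_add, exp_add] at hprod ⊢
  rw [← (summable_int_exp_neg_mul_sq ha).tsum_mul_tsum (summable_int_exp_neg_mul_sq hb) hprod]
  exact mul_le_mul (tsum_int_exp_neg_mul_sq_le ha) (tsum_int_exp_neg_mul_sq_le hb)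
    (tsum_nonneg fun _ => (exp_pos _).le) (by positivity)

end ThetaSum

/-- `|k|²` for the reciprocal-lattice vector `k = (2π n₁/Lx, 2π n₂/Ly)`. -/
noncomputable def reciprocalNormSq (Lx Ly : ℝ) (n : ℤ × ℤ) : ℝ :=
  (2 * π * n.1 / Lx) ^ 2 + (2 * π * n.2 / Ly) ^ 2

section ReciprocalLattice

variable {Lx Ly s : ℝ}

lemma sq_mul_reciprocalNormSq_div_eight (hLx : Lx ≠ 0) (hLy : Ly ≠ 0) (n : ℤ × ℤ) :
    s ^ 2 * reciprocalNormSq Lx Ly n / 8 =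
      s ^ 2 * π ^ 2 / (2 * Lx ^ 2) * (n.1 : ℝ) ^ 2 +
        s ^ 2 * π ^ 2 / (2 * Ly ^ 2) * (n.2 : ℝ) ^ 2 := by
  unfold reciprocalNormSq
  field_simp
  ring

lemma sqrt_pi_div_gaussian_coeff {L : ℝ} (hL : 0 < L) (hs : 0 < s) :
    √(π / (s ^ 2 * π ^ 2 / (2 * L ^ 2))) = √2 * L / (s * √π) := by
  have hsq : π / (s ^ 2 * π ^ 2 / (2 * L ^ 2)) = (√2 * L / (s * √π)) ^ 2 := by
    rw [div_pow, mul_pow, mul_pow, sq_sqrt zero_le_two, sq_sqrt pi_pos.le]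
    field_simp
  rw [hsq, sqrt_sq (by positivity)]

lemma summable_exp_neg_reciprocalNormSq (hLx : Lx ≠ 0) (hLy : Ly ≠ 0) (hs : s ≠ 0) :
    Summable fun n => exp (-(s ^ 2 * reciprocalNormSq Lx Ly n / 8)) := by
  simp only [sq_mul_reciprocalNormSq_div_eight hLx hLy]
  exact summable_int_prod_exp_neg_mul_sq (by positivity) (by positivity)

lemma tsum_exp_neg_reciprocalNormSq_le (hLx : 0 < Lx) (hLy : 0 < Ly) (hs : 0 < s) :
    ∑' n, exp (-(s ^ 2 * reciprocalNormSq Lx Ly n / 8)) ≤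
      (1 + √2 * Lx / (s * √π)) * (1 + √2 * Ly / (s * √π)) := by
  simp only [sq_mul_reciprocalNormSq_div_eight hLx.ne' hLy.ne']
  rw [← sqrt_pi_div_gaussian_coeff hLx hs, ← sqrt_pi_div_gaussian_coeff hLy hs]
  exact tsum_int_prod_exp_neg_mul_sq_le (by positivity) (by positivity)

lemma exp_neg_div_four_le_of_sq_le {r K : ℝ} (hK : K ^ 2 ≤ r) :
    exp (-(s ^ 2 * r / 4)) ≤ exp (-(s ^ 2 * K ^ 2 / 8)) * exp (-(s ^ 2 * r / 8)) := by
  rw [← exp_add, exp_le_exp]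
  nlinarith [mul_le_mul_of_nonneg_left hK (sq_nonneg s)]

theorem norm_tsum_reciprocal_tail_le (hLx : 0 < Lx) (hLy : 0 < Ly) (hs : 0 < s) {K : ℝ}
    (hK : 0 ≤ K) {Q : ℝ} (hQ : 0 ≤ Q) (f : {n : ℤ × ℤ // K < √(reciprocalNormSq Lx Ly n)} → ℂ)
    (hf : ∀ n, ‖f n‖ ≤ Q) :
    ‖∑' n : {n : ℤ × ℤ // K < √(reciprocalNormSq Lx Ly n)},
        ((exp (-(s ^ 2 * reciprocalNormSq Lx Ly n / 4)) : ℝ) : ℂ) * f n‖ ≤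
      Q * ((1 + √2 * Lx / (s * √π)) * (1 + √2 * Ly / (s * √π)) *
        exp (-(s ^ 2 * K ^ 2 / 8))) := by
  set G := fun n => exp (-(s ^ 2 * reciprocalNormSq Lx Ly n / 8))
  set E := exp (-(s ^ 2 * K ^ 2 / 8))
  have hG : Summable G := summable_exp_neg_reciprocalNormSq hLx.ne' hLy.ne' hs.ne'
  have hterm : ∀ n : {n : ℤ × ℤ // K < √(reciprocalNormSq Lx Ly n)},
      ‖((exp (-(s ^ 2 * reciprocalNormSq Lx Ly n / 4)) : ℝ) : ℂ) * f n‖ ≤ Q * E * G n := by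
    rintro ⟨n, hn⟩
    have hKn : K ^ 2 ≤ reciprocalNormSq Lx Ly n := ((lt_sqrt hK).mp hn).le
    rw [norm_mul, Complex.norm_real, norm_of_nonneg (exp_pos _).le]
    calc _ ≤ E * G n * Q := mul_le_mul (exp_neg_div_four_le_of_sq_le hKn) (hf _) (norm_nonneg _)
          (by positivity)
      _ = Q * E * G n := by ring
  calc _ ≤ ∑' n : {n : ℤ × ℤ // K < √(reciprocalNormSq Lx Ly n)}, Q * E * G n :=
        tsum_of_norm_bounded ((hG.subtype _).mul_left _).hasSum hterm
    _ = Q * E * ∑' n : {n : ℤ × ℤ // K < √(reciprocalNormSq Lx Ly n)}, G n := tsum_mul_left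
    _ ≤ Q * E * ∑' n, G n := by
        gcongr
        exact hG.tsum_subtype_le _ _ fun _ => (exp_pos _).le
    _ ≤ Q * E * ((1 + √2 * Lx / (s * √π)) * (1 + √2 * Ly / (s * √π))) := by
        gcongr
        exact tsum_exp_neg_reciprocalNormSq_le hLx hLy hs
    _ = _ := by ring

end ReciprocalLattice

lemma norm_sum_mul_exp_mul_le {ι : Type*} [Fintype ι] (q θ c : ι → ℝ) (hc₀ : ∀ j, 0 ≤ c j)
    (hc₁ : ∀ j, c j ≤ 1) :
    ‖∑ j, (q j : ℂ) * Complex.exp (Complex.I * (θ j : ℂ)) * (c j : ℂ)‖ ≤ ∑ j, |q j| := by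
  refine (norm_sum_le _ _).trans (Finset.sum_le_sum fun j _ => ?_)
  rw [norm_mul, norm_mul, mul_comm Complex.I, Complex.norm_exp_ofReal_mul_I, Complex.norm_real,
    Complex.norm_real, norm_eq_abs, norm_of_nonneg (hc₀ j), mul_one]
  exact mul_le_of_le_one_right (abs_nonneg _) (hc₁ j)

/-- Explicit-constant Fourier-truncation estimate for the long-range part of the
spectral sum-of-Gaussians solver: truncating the reciprocal-lattice sum in the
closed-form long-range potential at `|k| ≤ K` incurs an error bounded by
`(Σ_j |q_j|) Σ_ℓ w_ℓ s_ℓ² (1 + √2L_x/(s_ℓ√π))(1 + √2L_y/(s_ℓ√π)) e^{-s_ℓ²K²/8}`. -/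
theorem long_range_fourier_truncation_bound (Lx Ly : ℝ) (hLx : 0 < Lx) (hLy : 0 < Ly)
    (N : ℕ) (q : Fin N → ℝ) (x : Fin N → ℝ × ℝ) (z : Fin N → ℝ) (i : Fin N)
    (m M : ℕ) (w s : ℕ → ℝ)
    (hw : ∀ ℓ ∈ Finset.Icc (m + 1) M, 0 < w ℓ)
    (hs : ∀ ℓ ∈ Finset.Icc (m + 1) M, 0 < s ℓ)
    (K : ℝ) (hK : 0 < K) :
    ‖(∑ ℓ ∈ Finset.Icc (m + 1) M, ((w ℓ * (s ℓ) ^ 2 : ℝ) : ℂ) *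
      ∑' n : {n : ℤ × ℤ //
          K < Real.sqrt ((2 * Real.pi * n.1 / Lx) ^ 2 + (2 * Real.pi * n.2 / Ly) ^ 2)},
        ((Real.exp (-((s ℓ) ^ 2 *
            ((2 * Real.pi * n.1.1 / Lx) ^ 2 + (2 * Real.pi * n.1.2 / Ly) ^ 2) / 4)) : ℝ) : ℂ) *
          ∑ j, ((q j : ℝ) : ℂ) *
            Complex.exp (Complex.I *
              (((2 * Real.pi * n.1.1 / Lx) * ((x i).1 - (x j).1) +
                (2 * Real.pi * n.1.2 / Ly) * ((x i).2 - (x j).2) : ℝ) : ℂ)) *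
            ((Real.exp (-((z i - z j) ^ 2 / (s ℓ) ^ 2)) : ℝ) : ℂ))‖ ≤
      (∑ j, |q j|) * ∑ ℓ ∈ Finset.Icc (m + 1) M,
        w ℓ * (s ℓ) ^ 2 * (1 + Real.sqrt 2 * Lx / (s ℓ * Real.sqrt Real.pi)) *
          (1 + Real.sqrt 2 * Ly / (s ℓ * Real.sqrt Real.pi)) *
          Real.exp (-((s ℓ) ^ 2 * K ^ 2 / 8)) := by
  refine (norm_sum_le _ _).trans ?_
  rw [Finset.mul_sum]
  refine Finset.sum_le_sum fun ℓ hℓ => ?_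
  have hsℓ := hs ℓ hℓ
  have hwℓ := hw ℓ hℓ
  rw [norm_mul, Complex.norm_real, norm_of_nonneg (by positivity)]
  calc _ ≤ w ℓ * s ℓ ^ 2 * ((∑ j, |q j|) * ((1 + √2 * Lx / (s ℓ * √π)) *
        (1 + √2 * Ly / (s ℓ * √π)) * exp (-(s ℓ ^ 2 * K ^ 2 / 8)))) := by
        gcongr
        refine norm_tsum_reciprocal_tail_le hLx hLy hsℓ hK.le
          (Finset.sum_nonneg fun j _ => abs_nonneg (q j)) _ fun _ => ?_
        exact norm_sum_mul_exp_mul_le q _ _ (fun _ => (exp_pos _).le)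
          fun _ => exp_le_one_iff.mpr (neg_nonpos.mpr (by positivity))
    _ = _ := by ring
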